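/- arXiv:2009.00732 — 2 statements merged into one kernel-verified Lean document; each statement's English description precedes it below -/
import Mathlib

section
/- Let G be a graph, v a vertex of G, and k ≥ 1. If there is an escape path in G from v to a pendant vertex ℓ, then the number of independent sets of G of size k containing v is at most the number of independent sets of G of size k containing ℓ. -/
open scoped Classical

variable {V : Type*}

/-- `P = p 1, p 2, …, p n` is an escape path in `G` (from `p 1` to `p n`):
a path in `G` whose last vertex `p n` has degree 1 and whose vertices
`p i` for `2 ≤ i ≤ n - 2` have degree 2. -/
def IsEscapePath [Fintype V] (G : SimpleGraph V) (n : ℕ) (p : ℕ → V) : Prop :=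
  1 ≤ n ∧ Set.InjOn p (Set.Icc 1 n) ∧
  (∀ i, 1 ≤ i → i < n → G.Adj (p i) (p (i + 1))) ∧
  G.degree (p n) = 1 ∧
  ∀ i, 2 ≤ i → i ≤ n - 2 → G.degree (p i) = 2

/-- The flip of the path `p 1, …, p n`: it maps `p i` to `p (n + 1 - i)` and
fixes every vertex outside the path. -/
noncomputable def flipP (n : ℕ) (p : ℕ → V) : V → V := fun x =>
  if h : ∃ i, 1 ≤ i ∧ i ≤ n ∧ p i = x then p (n + 1 - h.choose) else x

/-- `s` is an independent set of `G`. -/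
def IndepSet (G : SimpleGraph V) (s : Set V) : Prop :=
  ∀ x ∈ s, ∀ y ∈ s, x ≠ y → ¬ G.Adj x y

/-- The star `I^k_G(u)`: the family of independent `k`-subsets of `G`
containing the vertex `u`. -/
noncomputable def star [Fintype V] (G : SimpleGraph V) (k : ℕ) (u : V) :
    Finset (Finset V) :=
  Finset.univ.filter
    (fun A : Finset V => A.card = k ∧ u ∈ A ∧
      ∀ x ∈ A, ∀ y ∈ A, x ≠ y → ¬ G.Adj x y)

/- The flip `p i ↦ p (n + 1 - i)` of the escape path, fixing every other vertex, is an involution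
taking `k`-sets containing `v = p 1` to `k`-sets containing `ℓ = p n`, so it suffices that it
preserves independence of such sets. Since the interior vertices and `ℓ` have no neighbours but
their path neighbours, the flip of an edge is again an edge, with two exceptions: edges at
`p (n - 1)`, which flips to `p 2`, a neighbour of `p 1`; and edges from `p 1` to a vertex `b` off
the path, where `b` is itself a neighbour of `p 1`. Neither can occur inside a set containing
`p 1`. -/

lemma mem_star [Fintype V] {G : SimpleGraph V} {k : ℕ} {u : V} {A : Finset V} :
    A ∈ star G k u ↔
      A.card = k ∧ u ∈ A ∧ ∀ x ∈ A, ∀ y ∈ A, x ≠ y → ¬ G.Adj x y := by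
  simp [_root_.star]

lemma SimpleGraph.mem_of_adj_of_degree_le {G : SimpleGraph V} {x y : V}
    [Fintype (G.neighborSet x)] {s : Finset V} (hs : ∀ z ∈ s, G.Adj x z)
    (hdeg : G.degree x ≤ s.card) (hxy : G.Adj x y) : y ∈ s := by
  have hsub : s ⊆ G.neighborFinset x := fun z hz => (G.mem_neighborFinset x z).2 (hs z hz)
  rw [Finset.eq_of_subset_of_card_le hsub (by rwa [G.card_neighborFinset_eq_degree])]
  exact (G.mem_neighborFinset x y).2 hxy

section flipP

variable {n : ℕ} {p : ℕ → V}

lemma flipP_apply (hinj : Set.InjOn p (Set.Icc 1 n)) {i : ℕ} (hi : 1 ≤ i) (hin : i ≤ n) :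
    flipP n p (p i) = p (n + 1 - i) := by
  have h : ∃ j, 1 ≤ j ∧ j ≤ n ∧ p j = p i := ⟨i, hi, hin, rfl⟩
  obtain ⟨hj, hjn, hji⟩ := h.choose_spec
  rw [flipP, dif_pos h, hinj ⟨hj, hjn⟩ ⟨hi, hin⟩ hji]

lemma flipP_apply_of_not_exists {x : V} (h : ¬ ∃ i, 1 ≤ i ∧ i ≤ n ∧ p i = x) :
    flipP n p x = x :=
  dif_neg h

lemma flipP_involutive (hinj : Set.InjOn p (Set.Icc 1 n)) : Function.Involutive (flipP n p) := by
  intro x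
  by_cases h : ∃ i, 1 ≤ i ∧ i ≤ n ∧ p i = x
  · obtain ⟨i, hi, hin, rfl⟩ := h
    rw [flipP_apply hinj hi hin, flipP_apply hinj (by omega) (by omega),
      Nat.sub_sub_self (by omega)]
  · rw [flipP_apply_of_not_exists h, flipP_apply_of_not_exists h]

end flipP

namespace IsEscapePath

variable [Fintype V] {G : SimpleGraph V} {n : ℕ} {p : ℕ → V}

lemma injOn (hp : IsEscapePath G n p) : Set.InjOn p (Set.Icc 1 n) := hp.2.1

lemma adj_succ (hp : IsEscapePath G n p) {i : ℕ} (hi : 1 ≤ i) (hin : i < n) :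
    G.Adj (p i) (p (i + 1)) :=
  hp.2.2.1 i hi hin

lemma eq_of_adj (hp : IsEscapePath G n p) {i : ℕ} {y : V} (hi : 2 ≤ i) (hin : i ≤ n)
    (hin' : i ≠ n - 1) (h : G.Adj (p i) y) : y = p (i - 1) ∨ (i < n ∧ y = p (i + 1)) := by
  have ⟨_, _, _, hdeg_last, hdeg_interior⟩ := hp
  have hpred : G.Adj (p i) (p (i - 1)) := by
    have := hp.adj_succ (i := i - 1) (by omega) (by omega)
    rwa [Nat.sub_add_cancel (by omega : 1 ≤ i), G.adj_comm] at this
  rcases hin.eq_or_lt with rfl | hlt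
  · have := G.mem_of_adj_of_degree_le (s := {p (i - 1)}) (by simpa using hpred)
      (by simp [hdeg_last]) h
    exact .inl (Finset.mem_singleton.1 this)
  · have hne : p (i - 1) ≠ p (i + 1) := fun he => by
      have := hp.injOn (⟨by omega, by omega⟩ : i - 1 ∈ Set.Icc 1 n)
        (⟨by omega, by omega⟩ : i + 1 ∈ Set.Icc 1 n) he
      omega
    have := G.mem_of_adj_of_degree_le (s := {p (i - 1), p (i + 1)})
      (by simp [hpred, hp.adj_succ (by omega) hlt])
      (by rw [Finset.card_pair hne, hdeg_interior i hi (by omega)]) h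
    simpa [hlt] using this

lemma adj_flipP_flipP_succ (hp : IsEscapePath G n p) {i : ℕ} (hi : 1 ≤ i) (hin : i < n) :
    G.Adj (flipP n p (p i)) (flipP n p (p (i + 1))) := by
  rw [flipP_apply hp.injOn hi hin.le, flipP_apply hp.injOn (by omega) hin]
  convert (hp.adj_succ (i := n - i) (by omega) (by omega)).symm using 2 <;> omega

lemma adj_flipP_of_adj_interior (hp : IsEscapePath G n p) {i : ℕ} {y : V} (hi : 2 ≤ i)
    (hin : i ≤ n) (hin' : i ≠ n - 1) (h : G.Adj (p i) y) :
    G.Adj (flipP n p (p i)) (flipP n p y) := by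
  rcases hp.eq_of_adj hi hin hin' h with rfl | ⟨hlt, rfl⟩
  · have := hp.adj_flipP_flipP_succ (i := i - 1) (by omega) (by omega)
    rw [Nat.sub_add_cancel (by omega : 1 ≤ i)] at this
    exact this.symm
  · exact hp.adj_flipP_flipP_succ (by omega) hlt

lemma adj_flipP_or_of_adj_path (hp : IsEscapePath G n p) {i : ℕ} {y : V} (hi : 1 ≤ i)
    (hin : i ≤ n) (h : G.Adj (p i) y) :
    G.Adj (flipP n p (p i)) (flipP n p y) ∨ flipP n p (p i) = p 2 ∨ flipP n p y = p 2 ∨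
      (i = 1 ∧ flipP n p y = y) := by
  have flipP_pred_last {j : ℕ} (hj : 1 ≤ j) (hjn : j = n - 1) : flipP n p (p j) = p 2 := by
    rw [flipP_apply hp.injOn hj (by omega)]
    congr 1
    omega
  by_cases hin' : i = n - 1
  · exact .inr (.inl (flipP_pred_last hi hin'))
  obtain rfl | hi := hi.eq_or_lt
  · by_cases hy : ∃ j, 1 ≤ j ∧ j ≤ n ∧ p j = y
    · obtain ⟨j, hj, hjn, rfl⟩ := hy
      obtain rfl | hj := hj.eq_or_lt
      · exact (h.ne rfl).elim
      by_cases hjn' : j = n - 1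
      · exact .inr (.inr (.inl (flipP_pred_last hj.le hjn')))
      · exact .inl (hp.adj_flipP_of_adj_interior hj hjn hjn' h.symm).symm
    · exact .inr (.inr (.inr ⟨rfl, flipP_apply_of_not_exists hy⟩))
  · exact .inl (hp.adj_flipP_of_adj_interior hi hin hin' h)

lemma adj_flipP_or (hp : IsEscapePath G n p) {x y : V} (h : G.Adj x y) :
    G.Adj (flipP n p x) (flipP n p y) ∨ flipP n p x = p 2 ∨ flipP n p y = p 2 ∨
      (x = p 1 ∧ flipP n p y = y) ∨ (y = p 1 ∧ flipP n p x = x) := by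
  by_cases hx : ∃ i, 1 ≤ i ∧ i ≤ n ∧ p i = x
  · obtain ⟨i, hi, hin, rfl⟩ := hx
    rcases hp.adj_flipP_or_of_adj_path hi hin h with h' | h' | h' | ⟨rfl, h'⟩
    exacts [.inl h', .inr (.inl h'), .inr (.inr (.inl h')), .inr (.inr (.inr (.inl ⟨rfl, h'⟩)))]
  by_cases hy : ∃ j, 1 ≤ j ∧ j ≤ n ∧ p j = y
  · obtain ⟨j, hj, hjn, rfl⟩ := hy
    rcases hp.adj_flipP_or_of_adj_path hj hjn h.symm with h' | h' | h' | ⟨rfl, h'⟩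
    exacts [.inl h'.symm, .inr (.inr (.inl h')), .inr (.inl h'),
      .inr (.inr (.inr (.inr ⟨rfl, h'⟩)))]
  rw [flipP_apply_of_not_exists hx, flipP_apply_of_not_exists hy]
  exact .inl h

lemma image_flipP_mem_star (hp : IsEscapePath G n p) (hn : 1 < n) {k : ℕ} {A : Finset V}
    (hA : A ∈ star G k (p 1)) : A.image (flipP n p) ∈ star G k (p n) := by
  obtain ⟨hcard, h1A, hindep⟩ := mem_star.1 hA
  have hinj := (flipP_involutive hp.injOn).injective
  have h2A : p 2 ∉ A := fun h2A =>
    hindep _ h1A _ h2A (hp.adj_succ le_rfl hn).ne (hp.adj_succ le_rfl hn)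
  refine mem_star.2 ⟨by rw [Finset.card_image_of_injective A hinj, hcard], ?_, ?_⟩
  · refine Finset.mem_image.2 ⟨p 1, h1A, ?_⟩
    rw [flipP_apply hp.injOn le_rfl hn.le, Nat.add_sub_cancel]
  · simp only [Finset.mem_image]
    rintro _ ⟨x, hx, rfl⟩ _ ⟨y, hy, rfl⟩ hne hadj
    have hflip := hp.adj_flipP_or hadj
    simp only [flipP_involutive hp.injOn _] at hflip
    rcases hflip with h | rfl | rfl | ⟨h, h'⟩ | ⟨h, h'⟩
    · exact hindep _ hx _ hy (hinj.ne_iff.1 hne) h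
    · exact h2A hx
    · exact h2A hy
    · rw [h, ← h'] at hadj
      exact hindep _ h1A _ hy hadj.ne hadj
    · rw [h, ← h'] at hadj
      exact hindep _ hx _ h1A hadj.ne hadj

end IsEscapePath

theorem star_le_star_of_escapePath_general [Fintype V] (G : SimpleGraph V)
    (k : ℕ) (v ℓ : V)
    (n : ℕ) (p : ℕ → V) (hp : IsEscapePath G n p) (h1 : p 1 = v) (hn : p n = ℓ) :
    (star G k v).card ≤ (star G k ℓ).card := by
  subst h1 hn
  obtain rfl | hn := hp.1.eq_or_lt
  · exact le_rfl
  exact Finset.card_le_card_of_injOn (·.image (flipP n p))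
    (fun _ hA => hp.image_flipP_mem_star hn hA)
    (Finset.image_injective (flipP_involutive hp.injOn).injective).injOn

/-- if there is an escape path in `G` from `v` to a pendant vertex
`ℓ`, then for every `k ≥ 1` the star `I^k_G(v)` is at most as large as `I^k_G(ℓ)`. -/
theorem star_le_star_of_escapePath [Fintype V] (G : SimpleGraph V)
    (k : ℕ) (hk : 1 ≤ k) (v ℓ : V) (hℓ : G.degree ℓ = 1)
    (n : ℕ) (p : ℕ → V) (hp : IsEscapePath G n p) (h1 : p 1 = v) (hn : p n = ℓ) :
    (star G k v).card ≤ (star G k ℓ).card :=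
  star_le_star_of_escapePath_general G k v ℓ n p hp h1 hn
end

section
/- In the n-sunlet graph (a cycle C_n with one pendant edge attached to each cycle vertex), every cycle vertex has an escape path (of length 1) to its pendant neighbor; consequently, for every k ≥ 1 there is a pendant vertex ℓ such that |I^k(v)| ≤ |I^k(ℓ)| for every vertex v. -/
open scoped Classical

variable {V : Type*}

/-- The `n`-sunlet graph: a cycle `u_1, …, u_n` (the `Sum.inl` vertices) with a
pendant vertex `w_i = Sum.inr i` attached to each cycle vertex `u_i = Sum.inl i`. -/
def sunlet (n : ℕ) : SimpleGraph (Fin n ⊕ Fin n) :=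
  SimpleGraph.fromRel (fun a b =>
    match a, b with
    | Sum.inl i, Sum.inl j => (j : ℕ) = ((i : ℕ) + 1) % n
    | Sum.inl i, Sum.inr j => i = j
    | _, _ => False)

/-!
Every star `I^k(v)` is dominated by a pendant star: a cycle vertex `u_j` is the unique neighbour
of its pendant vertex `w_j`, so replacing `u_j` by `w_j` injects `I^k(u_j)` into `I^k(w_j)`;
and the rotations of the sunlet are automorphisms acting transitively on the pendant vertices,
so all pendant stars have the same size.
-/

open Finset Sum

section Star

variable [Fintype V] {G : SimpleGraph V}

lemma mem_star_iff {k : ℕ} {u : V} {A : Finset V} :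
    A ∈ star G k u ↔ A.card = k ∧ u ∈ A ∧ G.IsIndepSet (A : Set V) := by
  simp [_root_.star, SimpleGraph.IsIndepSet, Set.Pairwise]

lemma card_star_le_of_embedding {W : Type*} [Fintype W] {H : SimpleGraph W} (φ : G ↪g H)
    (k : ℕ) (u : V) :
    (star G k u).card ≤ (star H k (φ u)).card := by
  refine card_le_card_of_injOn (·.map φ.toEmbedding) (fun A hA => ?_)
    (map_injective _).injOn
  obtain ⟨hcard, hu, hA⟩ := mem_star_iff.1 hA
  refine mem_star_iff.2 ⟨by simpa using hcard, mem_map_of_mem _ hu, ?_⟩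
  rw [coe_map, SimpleGraph.IsIndepSet, φ.toEmbedding.injective.injOn.pairwise_image]
  exact hA.imp fun _ _ => φ.map_adj_iff.not.2

/-- Trading the unique neighbour `u` of `ℓ` for `ℓ` injects `I^k(u)` into `I^k(ℓ)`. -/
lemma card_star_le_of_neighborSet_eq {u ℓ : V} (h : G.neighborSet ℓ = {u}) (k : ℕ) :
    (star G k u).card ≤ (star G k ℓ).card := by
  have hadj : G.Adj ℓ u := by simp [← SimpleGraph.mem_neighborSet, h]
  have hℓ : ∀ {A}, A ∈ star G k u → ℓ ∉ A := fun hA hℓA => by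
    obtain ⟨-, hu, hA⟩ := mem_star_iff.1 hA
    exact hA hℓA hu hadj.ne hadj
  refine card_le_card_of_injOn (fun A => insert ℓ (A.erase u)) (fun A hA => ?_) ?_
  · obtain ⟨hcard, hu, hA'⟩ := mem_star_iff.1 hA
    have hℓ' : ℓ ∉ A.erase u := fun h' => hℓ hA (mem_of_mem_erase h')
    refine mem_star_iff.2 ⟨?_, mem_insert_self _ _, ?_⟩
    · rw [card_insert_of_notMem hℓ', card_erase_add_one hu, hcard]
    · rw [coe_insert, SimpleGraph.IsIndepSet, Set.pairwise_insert]
      refine ⟨hA'.mono (by simp), fun b hb _ => ?_⟩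
      have hbu : b ≠ u := (mem_erase.1 hb).1
      have hnadj : ¬ G.Adj ℓ b := fun hb' => hbu (by rwa [← Set.mem_singleton_iff, ← h])
      exact ⟨hnadj, fun hb' => hnadj hb'.symm⟩
  · refine Set.LeftInvOn.injOn (f₁' := fun B => insert u (B.erase ℓ)) fun A hA => ?_
    simp only
    rw [erase_insert fun h' => hℓ hA (mem_of_mem_erase h'),
      insert_erase (mem_star_iff.1 hA).2.1]

end Star

lemma isEscapePath_two_of_adj [Fintype V] {G : SimpleGraph V} {a b : V}
    (hab : G.Adj a b) (hb : G.degree b = 1) :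
    IsEscapePath G 2 (fun m => if m = 1 then a else b) := by
  refine ⟨le_of_lt one_lt_two, ?_, ?_, by simpa using hb, fun i hi hi' => by omega⟩
  · rintro i ⟨hi, hi'⟩ j ⟨hj, hj'⟩
    interval_cases i <;> interval_cases j <;> simp [hab.ne, hab.ne.symm]
  · intro i hi hi'
    obtain rfl : i = 1 := by omega
    simpa using hab

section Sunlet

variable {n : ℕ}

lemma sunlet_adj_inl_inl [NeZero n] (i j : Fin n) :
    (sunlet n).Adj (inl i) (inl j) ↔ i ≠ j ∧ (j = i + 1 ∨ i = j + 1) := by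
  have hsucc : ∀ i j : Fin n, (j : ℕ) = ((i : ℕ) + 1) % n ↔ j = i + 1 := fun i j => by
    rw [Fin.ext_iff, Fin.val_add, Fin.val_one', Nat.add_mod_mod]
  simp [sunlet, SimpleGraph.fromRel_adj, hsucc]

lemma sunlet_adj_inl_inr (i j : Fin n) : (sunlet n).Adj (inl i) (inr j) ↔ i = j := by
  simp [sunlet, SimpleGraph.fromRel_adj]

lemma not_sunlet_adj_inr_inr (i j : Fin n) : ¬ (sunlet n).Adj (inr i) (inr j) := by
  simp [sunlet, SimpleGraph.fromRel_adj]

lemma sunlet_neighborSet_inr (j : Fin n) : (sunlet n).neighborSet (inr j) = {inl j} := by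
  ext (i | i)
  · simp [SimpleGraph.adj_comm, sunlet_adj_inl_inr, eq_comm]
  · simp [not_sunlet_adj_inr_inr]

lemma sunlet_degree_inr (j : Fin n) : (sunlet n).degree (inr j) = 1 := by
  simp [← SimpleGraph.card_neighborFinset_eq_degree, SimpleGraph.neighborFinset,
    sunlet_neighborSet_inr]

def sunletRotate [NeZero n] (c : Fin n) : sunlet n ≃g sunlet n where
  toEquiv := Equiv.sumCongr (Equiv.addRight c) (Equiv.addRight c)
  map_rel_iff' := by
    rintro (i | i) (j | j)
    · simp [sunlet_adj_inl_inl, add_right_comm _ c 1]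
    · simp [sunlet_adj_inl_inr]
    · simp [SimpleGraph.adj_comm _ (inr _), sunlet_adj_inl_inr]
    · simp [not_sunlet_adj_inr_inr]

lemma card_star_sunlet_inr_le [NeZero n] (k : ℕ) (i j : Fin n) :
    (star (sunlet n) k (inr i)).card ≤ (star (sunlet n) k (inr j)).card := by
  have hrot : sunletRotate (j - i) (inr i) = inr j := by simp [sunletRotate]
  simpa [hrot] using card_star_le_of_embedding (sunletRotate (j - i)).toEmbedding k (inr i)

end Sunlet

/-- in the `n`-sunlet graph, every cycle vertex has an escape path
of length 1 to its pendant neighbor; consequently for every `k ≥ 1` there is a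
pendant vertex `ℓ` whose star `I^k(ℓ)` is at least as large as every star
`I^k(v)`. -/
theorem sunlet_HK (n : ℕ) (hn : 3 ≤ n) :
    (∀ i : Fin n, ∃ p : ℕ → (Fin n ⊕ Fin n),
        IsEscapePath (sunlet n) 2 p ∧ p 1 = Sum.inl i ∧ p 2 = Sum.inr i) ∧
      ∀ k : ℕ, 1 ≤ k → ∃ ℓ : Fin n ⊕ Fin n, (sunlet n).degree ℓ = 1 ∧
        ∀ v : Fin n ⊕ Fin n,
          (star (sunlet n) k v).card ≤ (star (sunlet n) k ℓ).card := by
  have : NeZero n := ⟨by omega⟩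
  refine ⟨fun i => ⟨_, isEscapePath_two_of_adj ((sunlet_adj_inl_inr i i).2 rfl)
    (sunlet_degree_inr i), rfl, rfl⟩, fun k _ => ⟨inr 0, sunlet_degree_inr 0, ?_⟩⟩
  rintro (j | j)
  · exact (card_star_le_of_neighborSet_eq (sunlet_neighborSet_inr j) k).trans
      (card_star_sunlet_inr_le k j 0)
  · exact card_star_sunlet_inr_le k j 0
end
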